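/- If the rank-one matrices d_1 d_1^T, ..., d_k d_k^T (with each d_i a unit vector in R^p) are linearly independent, then each d_i d_i^T is an extreme point of the convex set K = {B ∈ Span{d_1 d_1^T, ..., d_k d_k^T} : Tr(B) = 1, B ⪰ 0}. -/

import Mathlib

/-!
Rank-one matrices `d dᵀ` with `‖d‖ = 1` are extreme points of the whole spectraplex
`{B ⪰ 0, tr B = 1}`, hence of any subset containing them. If `d dᵀ = a X + b Y` with `X, Y ⪰ 0`
and `a, b > 0`, then `X` vanishes on `d^⊥` (the kernel of `d dᵀ`), so the symmetric matrix `X`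
is a multiple of `d dᵀ`, and the trace normalisation forces `X = d dᵀ`.
-/

open Matrix
open scoped ComplexOrder

namespace Matrix

variable {n : Type*} [Fintype n]

theorem PosSemidef.mulVec_eq_zero_of_add_mulVec_eq_zero {𝕜 : Type*} [RCLike 𝕜]
    {X Y : Matrix n n 𝕜} (hX : X.PosSemidef) (hY : Y.PosSemidef) {v : n → 𝕜}
    (h : (X + Y) *ᵥ v = 0) : X *ᵥ v = 0 := by
  have hsum : star v ⬝ᵥ X *ᵥ v + star v ⬝ᵥ Y *ᵥ v = 0 := by
    rw [← dotProduct_add, ← add_mulVec, h, dotProduct_zero]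
  rw [← hX.dotProduct_mulVec_zero_iff]
  exact ((add_eq_zero_iff_of_nonneg (hX.dotProduct_mulVec_nonneg v)
    (hY.dotProduct_mulVec_nonneg v)).1 hsum).1

/-- With `P = d dᵀ` a projection, `X` vanishing on `ker P` gives `X = X P`, symmetry gives
`X = P X`, and `P X P = (dᵀ X d) P`. -/
theorem IsSymm.eq_smul_vecMulVec_of_mulVec_eq_zero {R : Type*} [CommRing R] {X : Matrix n n R}
    (hX : X.IsSymm) {d : n → R} (hd : d ⬝ᵥ d = 1)
    (hker : ∀ v, d ⬝ᵥ v = 0 → X *ᵥ v = 0) :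
    X = (d ⬝ᵥ X *ᵥ d) • vecMulVec d d := by
  have hXP : X * vecMulVec d d = X := by
    refine ext_iff_mulVec.2 fun v => ?_
    have hperp : d ⬝ᵥ (v - (d ⬝ᵥ v) • d) = 0 := by
      rw [dotProduct_sub, dotProduct_smul, hd, smul_eq_mul, mul_one, sub_self]
    have hXv := hker _ hperp
    rw [mulVec_sub, mulVec_smul, sub_eq_zero] at hXv
    rw [← mulVec_mulVec, vecMulVec_mulVec, op_smul_eq_smul, mulVec_smul, hXv]
  have hPX : vecMulVec d d * X = X := by
    simpa only [transpose_mul, transpose_vecMulVec, hX.eq] using congrArg Matrix.transpose hXP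
  calc X = vecMulVec d d * (X * vecMulVec d d) := by rw [hXP, hPX]
    _ = (d ⬝ᵥ X *ᵥ d) • vecMulVec d d := by
      rw [mul_vecMulVec, vecMulVec_mul_vecMulVec, vecMulVec_smul]

variable (n) in
def spectraplex : Set (Matrix n n ℝ) :=
  {B | B.trace = 1 ∧ B.PosSemidef}

theorem vecMulVec_self_mem_extremePoints_spectraplex {d : n → ℝ} (hd : d ⬝ᵥ d = 1) :
    vecMulVec d d ∈ (spectraplex n).extremePoints ℝ := by
  refine ⟨⟨by rw [trace_vecMulVec, hd], by simpa using posSemidef_vecMulVec_self_star d⟩, ?_⟩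
  rintro X ⟨hXtr, hX⟩ Y ⟨-, hY⟩ ⟨a, b, ha, hb, -, hsum⟩
  have hker : ∀ v, d ⬝ᵥ v = 0 → X *ᵥ v = 0 := fun v hv => by
    have hsumv : (a • X + b • Y) *ᵥ v = 0 := by
      rw [hsum, vecMulVec_mulVec, hv, MulOpposite.op_zero, zero_smul]
    have haXv := (hX.smul ha.le).mulVec_eq_zero_of_add_mulVec_eq_zero (hY.smul hb.le) hsumv
    rwa [smul_mulVec, smul_eq_zero, or_iff_right ha.ne'] at haXv
  have hXeq := (isHermitian_iff_isSymm.1 hX.1).eq_smul_vecMulVec_of_mulVec_eq_zero hd hker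
  have hc : d ⬝ᵥ X *ᵥ d = 1 := by
    rwa [hXeq, trace_smul, trace_vecMulVec, hd, smul_eq_mul, mul_one] at hXtr
  rw [hXeq, hc, one_smul]

end Matrix

theorem atoms_are_extreme_points_general {p k : ℕ} (d : Fin k → (Fin p → ℝ))
    (hunit : ∀ i, ∑ t, d i t ^ 2 = 1) :
    ∀ i : Fin k,
      vecMulVec (d i) (d i) ∈
        Set.extremePoints ℝ
          {B : Matrix (Fin p) (Fin p) ℝ |
            B ∈ Submodule.span ℝ (Set.range fun j => vecMulVec (d j) (d j)) ∧
            B.trace = 1 ∧ B.PosSemidef} := by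
  intro i
  have hextreme := vecMulVec_self_mem_extremePoints_spectraplex
    (by simpa only [dotProduct, sq] using hunit i : d i ⬝ᵥ d i = 1)
  exact inter_extremePoints_subset_extremePoints_of_subset (fun B hB => hB.2)
    ⟨⟨Submodule.subset_span ⟨i, rfl⟩, hextreme.1⟩, hextreme⟩

theorem atoms_are_extreme_points {p k : ℕ} (d : Fin k → (Fin p → ℝ))
    (hunit : ∀ i, ∑ t, d i t ^ 2 = 1)
    (hli : LinearIndependent ℝ (fun i => vecMulVec (d i) (d i))) :
    ∀ i : Fin k,
      vecMulVec (d i) (d i) ∈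
        Set.extremePoints ℝ
          {B : Matrix (Fin p) (Fin p) ℝ |
            B ∈ Submodule.span ℝ (Set.range fun j => vecMulVec (d j) (d j)) ∧
            B.trace = 1 ∧ B.PosSemidef} :=
  atoms_are_extreme_points_general d hunit
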